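/- arXiv:2012.07785 — 5 statements merged into one kernel-verified Lean document; each statement's English description precedes it below -/
import Mathlib

section
/- Fix α ∈ (0,1) and a set Δ := Δ_m × (−∞, t̄] ⊆ ℝ^m × ℝ. Assume: (i) ℓ(θ,·) and ∇_θ ℓ(θ,·) exist and are P-integrable for every θ; (ii) the argmin of G_α over Δ is nonempty, and (θ*, t*) is a member of it; (iii) for every (θ,t) ∈ Δ with P(A(θ,t)) > 0, the set-restricted Polyak–Łojasiewicz inequality holds with parameter μ > 0: (1/2)·‖E[∇_θ ℓ(θ,d) | A(θ,t)]‖₂² ≥ μ·E[ℓ(θ,d) − ℓ*(θ,t) | A(θ,t)], where ℓ*(θ,t) := inf_{θ̃ ∈ Δ_m} E[ℓ(θ̃,d) | A(θ,t)]. Then for every (θ,t) ∈ Δ satisfying P(A(θ,t)) > α + 2αμ·(t* − t)_+, one has μ·( G_α(θ,t) − G_α(θ*,t*) ) ≤ (1/2)·( ‖(1/α)·E[1_{A(θ,t)}(d)·∇_θ ℓ(θ,d)]‖₂² + ( 1 − (1/α)·P(A(θ,t)) )² ), i.e., the ordinary Polyak–Łojasiewicz inequality for G_α with the right-hand side equal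 to (1/2)‖∇G_α(θ,t)‖₂² under interchange of differentiation and expectation. -/
open MeasureTheory ProbabilityTheory

/-- The CV@R objective `G_α(θ,t) = E_P[t + (1/α)·(ℓ(θ,d) - t)₊]`. -/
noncomputable def Galpha {m : ℕ} {D : Type*} [MeasurableSpace D] (P : Measure D)
    (ℓ : EuclideanSpace ℝ (Fin m) → D → ℝ) (α : ℝ)
    (θ : EuclideanSpace ℝ (Fin m)) (t : ℝ) : ℝ :=
  ∫ d, (t + α⁻¹ * max (ℓ θ d - t) 0) ∂P

/-- The event `A(θ,t) = {d : ℓ(θ,d) - t > 0}`. -/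
def Aev {m : ℕ} {D : Type*} (ℓ : EuclideanSpace ℝ (Fin m) → D → ℝ)
    (θ : EuclideanSpace ℝ (Fin m)) (t : ℝ) : Set D :=
  {d | ℓ θ d - t > 0}

/-- `ℓ*(θ,t) = inf_{θ̃ ∈ Δm} E[ℓ(θ̃,d) | A(θ,t)]`. -/
noncomputable def lstar {m : ℕ} {D : Type*} [MeasurableSpace D] (P : Measure D)
    (ℓ : EuclideanSpace ℝ (Fin m) → D → ℝ) (Δm : Set (EuclideanSpace ℝ (Fin m)))
    (θ : EuclideanSpace ℝ (Fin m)) (t : ℝ) : ℝ :=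
  ⨅ θ' : Δm, ∫ d, ℓ (θ' : EuclideanSpace ℝ (Fin m)) d ∂(P[|Aev ℓ θ t])

/-!
On the event `A = A(θ,t)` the positive part in `G_α(θ,t)` is exact, while for any other point
`(θ*,t*)` it only dominates its restriction to `A`. Writing `p = P(A)`, this gives
`G_α(θ,t) - G_α(θ*,t*) ≤ (t - t*)(1 - p/α) + α⁻¹ ∫_A (ℓ(θ,·) - ℓ(θ*,·))`.
Since `ℓ*(θ,t)` is at most the conditional mean of `ℓ(θ*,·)` on `A`, the restricted PL inequality
bounds `μ` times the second term by `‖α⁻¹ ∫_A ∇ℓ(θ,·)‖² / 2` (using `p > α`), and the condition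
`p > α + 2αμ(t* - t)₊` is exactly what bounds `μ` times the first term by `(1 - p/α)² / 2`.
-/

section Integrals

variable {D : Type*} [MeasurableSpace D] {P : Measure D}

lemma integral_cond_eq_inv_smul_setIntegral {E : Type*} [NormedAddCommGroup E] [NormedSpace ℝ E]
    (A : Set D) (f : D → E) : ∫ d, f d ∂P[|A] = (P.real A)⁻¹ • ∫ d in A, f d ∂P := by
  rw [ProbabilityTheory.cond, integral_smul_measure, ENNReal.toReal_inv, measureReal_def]

lemma integral_max_zero_eq_setIntegral_pos {f : D → ℝ} (hf : AEStronglyMeasurable f P) :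
    ∫ d, max (f d) 0 ∂P = ∫ d in {d | f d > 0}, f d ∂P := by
  rw [← integral_indicator₀ (nullMeasurableSet_lt aemeasurable_const hf.aemeasurable)]
  congr with d
  by_cases hd : 0 < f d
  · simp [hd, hd.le]
  · simp [hd, not_lt.mp hd]

lemma setIntegral_le_integral_max_zero {f : D → ℝ} (hf : Integrable f P) (A : Set D) :
    ∫ d in A, f d ∂P ≤ ∫ d, max (f d) 0 ∂P :=
  calc ∫ d in A, f d ∂P ≤ ∫ d in A, max (f d) 0 ∂P :=
        integral_mono hf.restrict hf.pos_part.restrict fun _ => le_max_left _ _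
    _ ≤ ∫ d, max (f d) 0 ∂P :=
        setIntegral_le_integral hf.pos_part (.of_forall fun _ => le_max_right _ _)

lemma setIntegral_sub_const [IsFiniteMeasure P] {f : D → ℝ} (hf : Integrable f P) (A : Set D)
    (t : ℝ) : ∫ d in A, (f d - t) ∂P = ∫ d in A, f d ∂P - t * P.real A := by
  rw [integral_sub hf.integrableOn (integrableOn_const (measure_ne_top P A)), setIntegral_const,
    smul_eq_mul, mul_comm]

end Integrals

section Galpha

variable {m : ℕ} {D : Type*} [MeasurableSpace D] {P : Measure D} [IsProbabilityMeasure P]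
  {ℓ : EuclideanSpace ℝ (Fin m) → D → ℝ} {α : ℝ}

lemma Galpha_eq_add_integral_max {θ : EuclideanSpace ℝ (Fin m)} (hℓ : Integrable (ℓ θ) P)
    (t : ℝ) : Galpha P ℓ α θ t = t + α⁻¹ * ∫ d, max (ℓ θ d - t) 0 ∂P := by
  have h : Integrable (fun d => ℓ θ d - t) P := hℓ.sub (integrable_const t)
  rw [Galpha, integral_add (integrable_const t) (h.pos_part.const_mul α⁻¹), integral_const,
    integral_const_mul]
  simp

lemma Galpha_eq_setIntegral_Aev {θ : EuclideanSpace ℝ (Fin m)} (hℓ : Integrable (ℓ θ) P)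
    (t : ℝ) : Galpha P ℓ α θ t =
      t + α⁻¹ * (∫ d in Aev ℓ θ t, ℓ θ d ∂P - t * P.real (Aev ℓ θ t)) := by
  have h : Integrable (fun d => ℓ θ d - t) P := hℓ.sub (integrable_const t)
  rw [Galpha_eq_add_integral_max hℓ, integral_max_zero_eq_setIntegral_pos h.aestronglyMeasurable,
    ← setIntegral_sub_const hℓ]
  rfl

lemma le_Galpha (hα : 0 ≤ α) {θ : EuclideanSpace ℝ (Fin m)} (hℓ : Integrable (ℓ θ) P) (t : ℝ)
    (A : Set D) : t + α⁻¹ * (∫ d in A, ℓ θ d ∂P - t * P.real A) ≤ Galpha P ℓ α θ t := by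
  rw [Galpha_eq_add_integral_max hℓ, ← setIntegral_sub_const hℓ]
  gcongr
  exact setIntegral_le_integral_max_zero (hℓ.sub (integrable_const t)) A

lemma Galpha_sub_Galpha_le (hα : 0 ≤ α) {θ θ' : EuclideanSpace ℝ (Fin m)}
    (hℓ : Integrable (ℓ θ) P) (hℓ' : Integrable (ℓ θ') P) (t t' : ℝ) :
    Galpha P ℓ α θ t - Galpha P ℓ α θ' t' ≤
      (t - t') * (1 - α⁻¹ * P.real (Aev ℓ θ t)) +
        α⁻¹ * (∫ d in Aev ℓ θ t, ℓ θ d ∂P - ∫ d in Aev ℓ θ t, ℓ θ' d ∂P) := by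
  have := le_Galpha hα hℓ' t' (Aev ℓ θ t)
  rw [Galpha_eq_setIntegral_Aev hℓ]
  linarith

end Galpha

lemma mul_measureReal_mul_setIntegral_sub_le {D E : Type*} [MeasurableSpace D]
    [NormedAddCommGroup E] [NormedSpace ℝ E] {P : Measure D} {A : Set D} (hA : 0 < P.real A)
    {f f' : D → ℝ} {g : D → E} {μ L : ℝ} (hμ : 0 ≤ μ)
    (hPL : μ * (∫ d, f d ∂P[|A] - L) ≤ 1 / 2 * ‖∫ d, g d ∂P[|A]‖ ^ 2)
    (hL : L ≤ ∫ d, f' d ∂P[|A]) :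
    μ * P.real A * (∫ d in A, f d ∂P - ∫ d in A, f' d ∂P) ≤ 1 / 2 * ‖∫ d in A, g d ∂P‖ ^ 2 := by
  simp only [integral_cond_eq_inv_smul_setIntegral, smul_eq_mul, norm_smul, norm_inv,
    Real.norm_of_nonneg hA.le] at hPL hL
  have key : μ * ((P.real A)⁻¹ * ∫ d in A, f d ∂P - (P.real A)⁻¹ * ∫ d in A, f' d ∂P) ≤
      1 / 2 * ((P.real A)⁻¹ * ‖∫ d in A, g d ∂P‖) ^ 2 :=
    (mul_le_mul_of_nonneg_left (by linarith) hμ).trans hPL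
  have hsq := mul_le_mul_of_nonneg_left key (sq_nonneg (P.real A))
  field_simp at hsq
  linarith

lemma mul_inv_mul_le_half_sq {α p μ X n : ℝ} (hα : 0 < α) (hp : α < p) (hμ : 0 ≤ μ)
    (h : μ * p * X ≤ 1 / 2 * n ^ 2) : μ * (α⁻¹ * X) ≤ 1 / 2 * (α⁻¹ * n) ^ 2 := by
  rcases le_or_gt X 0 with hX | hX
  · nlinarith [mul_nonpos_of_nonneg_of_nonpos (mul_nonneg hμ (inv_nonneg.mpr hα.le)) hX]
  · have hαX : μ * α * X ≤ 1 / 2 * n ^ 2 := by nlinarith [mul_nonneg hμ hX.le]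
    have e : μ * (α⁻¹ * X) = α⁻¹ ^ 2 * (μ * α * X) := by field_simp
    rw [e, mul_pow]
    nlinarith [sq_nonneg α⁻¹]

lemma mul_sub_mul_one_sub_le_half_sq {α p μ t s : ℝ} (hα : 0 < α) (hμ : 0 ≤ μ)
    (h : α + 2 * α * μ * max (s - t) 0 < p) :
    μ * ((t - s) * (1 - α⁻¹ * p)) ≤ 1 / 2 * (1 - α⁻¹ * p) ^ 2 := by
  set c := α⁻¹ * p - 1
  have hc : 2 * μ * max (s - t) 0 < c := by
    have : α * (2 * μ * max (s - t) 0) < α * c := by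
      simp only [c, mul_sub, mul_inv_cancel_left₀ hα.ne']; linarith
    exact lt_of_mul_lt_mul_left this hα.le
  have hs : μ * (s - t) ≤ μ * max (s - t) 0 := mul_le_mul_of_nonneg_left (le_max_left _ _) hμ
  have hc0 : 0 ≤ c := by nlinarith [le_max_right (s - t) 0]
  nlinarith [mul_le_mul_of_nonneg_right hs hc0]

theorem cvar_objective_is_PL_general
    {m : ℕ} {D : Type*} [MeasurableSpace D]
    (P : Measure D) [IsProbabilityMeasure P]
    (ℓ : EuclideanSpace ℝ (Fin m) → D → ℝ)
    (g : EuclideanSpace ℝ (Fin m) → D → EuclideanSpace ℝ (Fin m))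
    (hintℓ : ∀ θ, Integrable (ℓ θ) P)
    (α : ℝ) (hα : α ∈ Set.Ioo (0 : ℝ) 1)
    (Δm : Set (EuclideanSpace ℝ (Fin m))) (tbar : ℝ)
    (μ : ℝ) (hμ : 0 < μ)
    (θstar : EuclideanSpace ℝ (Fin m)) (tstar : ℝ)
    (hstarmem : θstar ∈ Δm ∧ tstar ≤ tbar)
    (hbdd : ∀ θ ∈ Δm, ∀ t ≤ tbar, 0 < P (Aev ℓ θ t) →
      BddBelow (Set.range fun θ' : Δm =>
        ∫ d, ℓ (θ' : EuclideanSpace ℝ (Fin m)) d ∂(P[|Aev ℓ θ t])))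
    (hPL : ∀ θ ∈ Δm, ∀ t ≤ tbar, 0 < P (Aev ℓ θ t) →
      μ * ((∫ d, ℓ θ d ∂(P[|Aev ℓ θ t])) - lstar P ℓ Δm θ t) ≤
        (1 / 2) * ‖∫ d, g θ d ∂(P[|Aev ℓ θ t])‖ ^ 2) :
    ∀ θ ∈ Δm, ∀ t ≤ tbar,
      α + 2 * α * μ * max (tstar - t) 0 < (P (Aev ℓ θ t)).toReal →
      μ * (Galpha P ℓ α θ t - Galpha P ℓ α θstar tstar) ≤
        (1 / 2) * (‖α⁻¹ • ∫ d in Aev ℓ θ t, g θ d ∂P‖ ^ 2 +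
          (1 - α⁻¹ * (P (Aev ℓ θ t)).toReal) ^ 2) := by
  intro θ hθ t ht hp
  set A := Aev ℓ θ t
  have hαp : α < P.real A := by
    have : 0 ≤ 2 * α * μ * max (tstar - t) 0 := by
      have := hα.1; have := le_max_right (tstar - t) 0; positivity
    exact lt_of_le_of_lt (le_add_of_nonneg_right this) hp
  have hA : 0 < P.real A := hα.1.trans hαp
  have hPA : 0 < P A := (ENNReal.toReal_pos_iff.mp hA).1
  have hlstar : lstar P ℓ Δm θ t ≤ ∫ d, ℓ θstar d ∂P[|A] :=
    ciInf_le (hbdd θ hθ t ht hPA) ⟨θstar, hstarmem.1⟩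
  have hgap := mul_measureReal_mul_setIntegral_sub_le hA hμ.le (hPL θ hθ t ht hPA) hlstar
  calc μ * (Galpha P ℓ α θ t - Galpha P ℓ α θstar tstar)
      ≤ μ * ((t - tstar) * (1 - α⁻¹ * P.real A)) +
          μ * (α⁻¹ * (∫ d in A, ℓ θ d ∂P - ∫ d in A, ℓ θstar d ∂P)) := by
        rw [← mul_add]
        exact mul_le_mul_of_nonneg_left
          (Galpha_sub_Galpha_le hα.1.le (hintℓ θ) (hintℓ θstar) t tstar) hμ.le
    _ ≤ 1 / 2 * (1 - α⁻¹ * P.real A) ^ 2 + 1 / 2 * (α⁻¹ * ‖∫ d in A, g θ d ∂P‖) ^ 2 :=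
        add_le_add (mul_sub_mul_one_sub_le_half_sq hα.1 hμ.le hp)
          (mul_inv_mul_le_half_sq hα.1 hαp hμ.le hgap)
    _ = 1 / 2 * (‖α⁻¹ • ∫ d in A, g θ d ∂P‖ ^ 2 + (1 - α⁻¹ * P.real A) ^ 2) := by
        rw [norm_smul, Real.norm_of_nonneg (inv_nonneg.mpr hα.1.le)]
        ring

/-- (`G_α` is Polyak–Łojasiewicz.) Fix `α ∈ (0,1)` and
`Δ = Δm × (-∞, t̄]`. Suppose `(θ*,t*)` minimizes `G_α` over `Δ`, and the loss satisfies the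
`A`-restricted Polyak–Łojasiewicz inequality with parameter `μ > 0` on `Δ`:
`(1/2)‖E[∇ℓ(θ,·)|A(θ,t)]‖² ≥ μ·E[ℓ(θ,·) - ℓ*(θ,t)|A(θ,t)]` (with `ℓ*(θ,t)` the infimum over
`Δm` of the conditional means, assumed bounded below so it is a real number). Then for every
`(θ,t) ∈ Δ` with `P(A(θ,t)) > α + 2αμ(t* - t)₊`, the ordinary PL inequality holds for `G_α`:
`μ(G_α(θ,t) - G_α(θ*,t*)) ≤ (1/2)(‖(1/α)E[1_{A(θ,t)}∇ℓ(θ,·)]‖² + (1 - (1/α)P(A(θ,t)))²)`,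
whose right-hand side is `(1/2)‖∇G_α(θ,t)‖²` under interchange of differentiation and
expectation. -/
theorem cvar_objective_is_PL
    {m : ℕ} {D : Type*} [MeasurableSpace D]
    (P : Measure D) [IsProbabilityMeasure P]
    (ℓ : EuclideanSpace ℝ (Fin m) → D → ℝ)
    (g : EuclideanSpace ℝ (Fin m) → D → EuclideanSpace ℝ (Fin m))
    (hmeas : ∀ θ, Measurable (ℓ θ))
    (hintℓ : ∀ θ, Integrable (ℓ θ) P)
    (hintg : ∀ θ, Integrable (g θ) P)
    (α : ℝ) (hα : α ∈ Set.Ioo (0 : ℝ) 1)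
    (Δm : Set (EuclideanSpace ℝ (Fin m))) (tbar : ℝ)
    (μ : ℝ) (hμ : 0 < μ)
    (θstar : EuclideanSpace ℝ (Fin m)) (tstar : ℝ)
    (hstarmem : θstar ∈ Δm ∧ tstar ≤ tbar)
    (hmin : ∀ θ ∈ Δm, ∀ t ≤ tbar, Galpha P ℓ α θstar tstar ≤ Galpha P ℓ α θ t)
    (hbdd : ∀ θ ∈ Δm, ∀ t ≤ tbar, 0 < P (Aev ℓ θ t) →
      BddBelow (Set.range fun θ' : Δm =>
        ∫ d, ℓ (θ' : EuclideanSpace ℝ (Fin m)) d ∂(P[|Aev ℓ θ t])))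
    (hPL : ∀ θ ∈ Δm, ∀ t ≤ tbar, 0 < P (Aev ℓ θ t) →
      μ * ((∫ d, ℓ θ d ∂(P[|Aev ℓ θ t])) - lstar P ℓ Δm θ t) ≤
        (1 / 2) * ‖∫ d, g θ d ∂(P[|Aev ℓ θ t])‖ ^ 2) :
    ∀ θ ∈ Δm, ∀ t ≤ tbar,
      α + 2 * α * μ * max (tstar - t) 0 < (P (Aev ℓ θ t)).toReal →
      μ * (Galpha P ℓ α θ t - Galpha P ℓ α θstar tstar) ≤
        (1 / 2) * (‖α⁻¹ • ∫ d in Aev ℓ θ t, g θ d ∂P‖ ^ 2 +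
          (1 - α⁻¹ * (P (Aev ℓ θ t)).toReal) ^ 2) :=
  cvar_objective_is_PL_general P ℓ g hintℓ α hα Δm tbar μ hμ θstar tstar hstarmem hbdd hPL
end

section
/- For all real numbers a, b, t, t* and every α ∈ (0,1], one has ( t + (1/α)·(a − t)_+ ) − ( t* + (1/α)·(b − t*)_+ ) ≤ (t* − t)·( (1/α)·1{a > t} − 1 ) + (1/α)·1{a > t}·(a − b), where 1{a > t} equals 1 if a > t and 0 otherwise. -/
/-!
This is the subgradient inequality of the convex function `(t, a) ↦ t + α⁻¹ (a - t)₊`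
at `(t, a)`, with subgradient `(1 - α⁻¹ 1{a>t}, α⁻¹ 1{a>t})`. It comes from the subgradient
inequality of the positive part, `x₊ + 1{x>0} (y - x) ≤ y₊`, scaled by `α⁻¹ ≥ 0`.
-/

theorem max_zero_add_ite_mul_sub_le {R : Type*} [Ring R] [LinearOrder R] [IsStrictOrderedRing R]
    (x y : R) : max x 0 + (if 0 < x then 1 else 0) * (y - x) ≤ max y 0 := by
  split_ifs with hx
  · rw [max_eq_left hx.le, one_mul, add_sub_cancel]
    exact le_max_left y 0
  · rw [max_eq_right (not_lt.mp hx), zero_mul, add_zero]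
    exact le_max_right y 0

/-- Pointwise bound on the difference of the CV@R integrands: for all reals
`a, b, t, t*` and `α ∈ (0,1]`,
`(t + (1/α)(a-t)₊) - (t* + (1/α)(b-t*)₊) ≤ (t*-t)((1/α)·1{a>t} - 1) + (1/α)·1{a>t}·(a-b)`. -/
theorem cvar_integrand_difference_bound
    (a b t tstar α : ℝ) (hα : α ∈ Set.Ioc (0 : ℝ) 1) :
    (t + α⁻¹ * max (a - t) 0) - (tstar + α⁻¹ * max (b - tstar) 0) ≤
      (tstar - t) * (α⁻¹ * (if a > t then (1 : ℝ) else 0) - 1) +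
        α⁻¹ * (if a > t then (1 : ℝ) else 0) * (a - b) := by
  have hinv : 0 ≤ α⁻¹ := inv_nonneg.mpr hα.1.le
  have hsubgrad := mul_le_mul_of_nonneg_left (max_zero_add_ite_mul_sub_le (a - t) (b - tstar)) hinv
  simp only [sub_pos] at hsubgrad
  linear_combination hsubgrad
end

section
/- Fix α ∈ (0,1], a set Δ_m ⊆ ℝ^m, a point (θ,t) ∈ ℝ^m × ℝ with P(A(θ,t)) > 0, and any (θ*, t*) ∈ Δ_m × ℝ. Assume ℓ(θ̃,·) is P-integrable for every θ̃. Then G_α(θ,t) − G_α(θ*,t*) ≤ (t* − t)·( (1/α)·P(A(θ,t)) − 1 ) + (1/α)·P(A(θ,t))·E[ ℓ(θ,d) − ℓ*(θ,t) | A(θ,t) ], where ℓ*(θ,t) := inf_{θ̃ ∈ Δ_m} E[ℓ(θ̃,d) | A(θ,t)]. -/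
open MeasureTheory ProbabilityTheory

section SetIntegral

variable {X : Type*} [MeasurableSpace X] {μ : Measure X} {g : X → ℝ}

theorem integral_max_zero_eq_setIntegral_pos_s7 (hg : Measurable g) :
    ∫ x, max (g x) 0 ∂μ = ∫ x in {x | 0 < g x}, g x ∂μ := by
  rw [← setIntegral_eq_integral_of_forall_compl_eq_zero (s := {x | 0 < g x})
    fun x hx => max_eq_right (not_lt.mp hx)]
  exact setIntegral_congr_fun (measurableSet_lt measurable_const hg)
    fun _ hx => max_eq_left (le_of_lt hx)

theorem setIntegral_le_integral_max_zero_s7 (hg : Integrable g μ) (s : Set X) :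
    ∫ x in s, g x ∂μ ≤ ∫ x, max (g x) 0 ∂μ :=
  (setIntegral_mono hg.integrableOn hg.pos_part.integrableOn fun _ => le_max_left _ _).trans
    (setIntegral_le_integral hg.pos_part (Filter.Eventually.of_forall fun _ => le_max_right _ _))

theorem setIntegral_sub_const_s7 {f : X → ℝ} {s : Set X} (hf : IntegrableOn f s μ)
    (hs : μ s ≠ ⊤) (c : ℝ) :
    ∫ x in s, (f x - c) ∂μ = ∫ x in s, f x ∂μ - μ.real s * c := by
  have : IsFiniteMeasure (μ.restrict s) := isFiniteMeasure_restrict.mpr hs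
  rw [integral_sub hf (integrable_const c), setIntegral_const, smul_eq_mul]

theorem measureReal_mul_integral_cond {s : Set X} (hs : μ s ≠ ⊤) (f : X → ℝ) :
    μ.real s * ∫ x, f x ∂μ[|s] = ∫ x in s, f x ∂μ := by
  rw [ProbabilityTheory.cond, integral_smul_measure, ENNReal.toReal_inv, smul_eq_mul,
    ← measureReal_def]
  by_cases h : μ.real s = 0
  · rw [h, zero_mul, Measure.restrict_eq_zero.mpr ((measureReal_eq_zero_iff hs).mp h),
      integral_zero_measure]
  · rw [← mul_assoc, mul_inv_cancel₀ h, one_mul]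

end SetIntegral

section CVaR

variable {m : ℕ} {D : Type*} [MeasurableSpace D] {P : Measure D} [IsProbabilityMeasure P]
  {ℓ : EuclideanSpace ℝ (Fin m) → D → ℝ} {α : ℝ} {θ : EuclideanSpace ℝ (Fin m)} {t : ℝ}

theorem Galpha_eq_add_integral_max_zero (hint : Integrable (ℓ θ) P) :
    Galpha P ℓ α θ t = t + α⁻¹ * ∫ d, max (ℓ θ d - t) 0 ∂P := by
  have hpos : Integrable (fun d => max (ℓ θ d - t) 0) P :=
    (hint.sub (integrable_const t)).pos_part
  rw [Galpha, integral_add (integrable_const t) (hpos.const_mul α⁻¹),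
    integral_const, integral_const_mul, probReal_univ, one_smul]

theorem Galpha_eq_add_setIntegral_Aev (hmeas : Measurable (ℓ θ)) (hint : Integrable (ℓ θ) P) :
    Galpha P ℓ α θ t = t + α⁻¹ * ∫ d in Aev ℓ θ t, (ℓ θ d - t) ∂P := by
  rw [Galpha_eq_add_integral_max_zero hint,
    integral_max_zero_eq_setIntegral_pos_s7 (g := fun d => ℓ θ d - t)
      (hmeas.sub measurable_const)]
  rfl

theorem add_setIntegral_le_Galpha (hint : Integrable (ℓ θ) P) (hα : 0 ≤ α) (s : Set D) :
    t + α⁻¹ * ∫ d in s, (ℓ θ d - t) ∂P ≤ Galpha P ℓ α θ t := by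
  rw [Galpha_eq_add_integral_max_zero hint]
  gcongr
  exact setIntegral_le_integral_max_zero_s7 (hint.sub (integrable_const t)) s

end CVaR

theorem cvar_objective_gap_bound_general
    {m : ℕ} {D : Type*} [MeasurableSpace D]
    (P : Measure D) [IsProbabilityMeasure P]
    (ℓ : EuclideanSpace ℝ (Fin m) → D → ℝ)
    (hmeas : ∀ θ', Measurable (ℓ θ'))
    (hint : ∀ θ', Integrable (ℓ θ') P)
    (α : ℝ) (hα : α ∈ Set.Ioc (0 : ℝ) 1)
    (Δm : Set (EuclideanSpace ℝ (Fin m)))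
    (θ : EuclideanSpace ℝ (Fin m)) (t : ℝ)
    (θstar : EuclideanSpace ℝ (Fin m)) (tstar : ℝ) (hθstar : θstar ∈ Δm)
    (hbdd : BddBelow (Set.range fun θ' : Δm =>
      ∫ d, ℓ (θ' : EuclideanSpace ℝ (Fin m)) d ∂(P[|Aev ℓ θ t]))) :
    Galpha P ℓ α θ t - Galpha P ℓ α θstar tstar ≤
      (tstar - t) * (α⁻¹ * (P (Aev ℓ θ t)).toReal - 1) +
        α⁻¹ * (P (Aev ℓ θ t)).toReal *
          ((∫ d, ℓ θ d ∂(P[|Aev ℓ θ t])) - lstar P ℓ Δm θ t) := by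
  set A := Aev ℓ θ t
  have hA : P A ≠ ⊤ := measure_ne_top P A
  have hGθ := Galpha_eq_add_setIntegral_Aev (α := α) (t := t) (hmeas θ) (hint θ)
  have hGθstar := add_setIntegral_le_Galpha (t := tstar) (hint θstar) hα.1.le A
  rw [setIntegral_sub_const_s7 (hint θ).integrableOn hA] at hGθ
  rw [setIntegral_sub_const_s7 (hint θstar).integrableOn hA] at hGθstar
  calc Galpha P ℓ α θ t - Galpha P ℓ α θstar tstar
      ≤ (t + α⁻¹ * (∫ d in A, ℓ θ d ∂P - P.real A * t))
          - (tstar + α⁻¹ * (∫ d in A, ℓ θstar d ∂P - P.real A * tstar)) := by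
        rw [hGθ]; linarith
    _ = (tstar - t) * (α⁻¹ * P.real A - 1) + α⁻¹ * P.real A *
          ((∫ d, ℓ θ d ∂(P[|A])) - ∫ d, ℓ θstar d ∂(P[|A])) := by
        rw [← measureReal_mul_integral_cond hA, ← measureReal_mul_integral_cond hA]; ring
    _ ≤ (tstar - t) * (α⁻¹ * P.real A - 1) + α⁻¹ * P.real A *
          ((∫ d, ℓ θ d ∂(P[|A])) - lstar P ℓ Δm θ t) := by
        have hw : 0 ≤ α⁻¹ * P.real A := mul_nonneg (inv_nonneg.2 hα.1.le) measureReal_nonneg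
        gcongr
        exact ciInf_le hbdd ⟨θstar, hθstar⟩

/-- For `α ∈ (0,1]`, a point `(θ,t)` with `P(A(θ,t)) > 0` and any
`(θ*,t*) ∈ Δm × ℝ`,
`G_α(θ,t) - G_α(θ*,t*) ≤ (t*-t)((1/α)P(A(θ,t)) - 1) + (1/α)P(A(θ,t))·E[ℓ(θ,d) - ℓ*(θ,t) | A(θ,t)]`
(with the conditional-mean infimum `ℓ*(θ,t)` taken over `Δm`, assumed bounded below so that
it is a real number). -/
theorem cvar_objective_gap_bound
    {m : ℕ} {D : Type*} [MeasurableSpace D]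
    (P : Measure D) [IsProbabilityMeasure P]
    (ℓ : EuclideanSpace ℝ (Fin m) → D → ℝ)
    (hmeas : ∀ θ', Measurable (ℓ θ'))
    (hint : ∀ θ', Integrable (ℓ θ') P)
    (α : ℝ) (hα : α ∈ Set.Ioc (0 : ℝ) 1)
    (Δm : Set (EuclideanSpace ℝ (Fin m)))
    (θ : EuclideanSpace ℝ (Fin m)) (t : ℝ)
    (hA : 0 < P (Aev ℓ θ t))
    (θstar : EuclideanSpace ℝ (Fin m)) (tstar : ℝ) (hθstar : θstar ∈ Δm)
    (hbdd : BddBelow (Set.range fun θ' : Δm =>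
      ∫ d, ℓ (θ' : EuclideanSpace ℝ (Fin m)) d ∂(P[|Aev ℓ θ t]))) :
    Galpha P ℓ α θ t - Galpha P ℓ α θstar tstar ≤
      (tstar - t) * (α⁻¹ * (P (Aev ℓ θ t)).toReal - 1) +
        α⁻¹ * (P (Aev ℓ θ t)).toReal *
          ((∫ d, ℓ θ d ∂(P[|Aev ℓ θ t])) - lstar P ℓ Δm θ t) :=
  cvar_objective_gap_bound_general P ℓ hmeas hint α hα Δm θ t θstar tstar hθstar hbdd
end

section
/- Let Z be an integrable real random variable, let W be independent of Z with distribution N(0, σ²), σ > 0, and fix α ∈ (0,1]. Then CV@R^α(Z) ≤ CV@R^α(Z − W) ≤ CV@R^α(Z) + σ/(α·√(2π)). -/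
/-!
`CV@R^α(Y)` is the infimum over `t` of `t + α⁻¹ E[(Y - t)₊]`, so both bounds follow from comparing
`E[(Z - W - t)₊]` with `E[(Z - t)₊]` for each `t`. Conditionally on `Z = z`, Jensen's inequality
for `(·)₊` and `E[W] = 0` give `(z - t)₊ ≤ E[(z - W - t)₊]`; independence and Fubini turn this
into the lower bound. The upper bound is pointwise: `(Z - W - t)₊ ≤ (Z - t)₊ + (-W)₊`, and
`E[(-W)₊] = σ / √(2π)` for `W ~ N(0, σ²)`.
-/

open MeasureTheory ProbabilityTheory

/-- Conditional Value-at-Risk at level `α ∈ (0,1]` of a real random variable `Z` on `(Ω, Q)`: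
`CV@R^α(Z) = inf_t { t + (1/α)·E[(Z - t)₊] }`. -/
noncomputable def cvar {Ω : Type*} [MeasurableSpace Ω] (Q : Measure Ω)
    (α : ℝ) (Z : Ω → ℝ) : ℝ :=
  ⨅ t : ℝ, (t + α⁻¹ * ∫ ω, max (Z ω - t) 0 ∂Q)

open Real Set
open scoped NNReal

lemma integral_Ioi_mul_exp_neg_mul_sq {b : ℝ} (hb : 0 < b) :
    ∫ x in Ioi (0 : ℝ), x * exp (-b * x ^ 2) = (2 * b)⁻¹ := by
  have h := integral_mul_cexp_neg_mul_sq (b := (b : ℂ)) (by simpa using hb)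
  rw [← Complex.ofReal_inj, ← integral_complex_ofReal]
  push_cast
  exact h

lemma integral_max_zero_gaussianReal (v : ℝ≥0) :
    ∫ x, max x 0 ∂gaussianReal 0 v = √v / √(2 * π) := by
  rcases eq_or_ne v 0 with rfl | hv
  · simp
  have hv' : (0 : ℝ) < v := by positivity
  have hpos : (fun x => gaussianPDFReal 0 v x • max x 0)
      = (Ioi 0).indicator fun x => (√(2 * π * v))⁻¹ * (x * exp (-(2 * (v : ℝ))⁻¹ * x ^ 2)) := by
    ext x
    rcases le_or_gt x 0 with hx | hx
    · simp [hx, not_lt.mpr hx]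
    · simp only [gaussianPDFReal, indicator_of_mem (mem_Ioi.mpr hx), max_eq_left hx.le,
        smul_eq_mul, sub_zero]
      ring_nf
  rw [integral_gaussianReal_eq_integral_smul hv, hpos, integral_indicator measurableSet_Ioi,
    integral_const_mul, integral_Ioi_mul_exp_neg_mul_sq (by positivity), sqrt_mul (by positivity)]
  field_simp
  rw [sq_sqrt hv'.le]

lemma integral_max_neg_zero_gaussianReal (v : ℝ≥0) :
    ∫ x, max (-x) 0 ∂gaussianReal 0 v = √v / √(2 * π) := by
  have h := integral_map (μ := gaussianReal 0 v) (φ := fun x => -x) (f := fun x => max x 0)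
    (by fun_prop) (by fun_prop)
  rw [gaussianReal_map_neg, neg_zero] at h
  rw [← h, integral_max_zero_gaussianReal]

lemma integrable_of_map_eq_gaussianReal {Ω : Type*} [MeasurableSpace Ω] {Q : Measure Ω}
    {W : Ω → ℝ} (hW : Measurable W) {m : ℝ} {v : ℝ≥0} (hlaw : Q.map W = gaussianReal m v) :
    Integrable W Q := by
  have h : Integrable (fun x => x) (gaussianReal m v) :=
    memLp_one_iff_integrable.mp (memLp_id_gaussianReal 1)
  rw [← hlaw] at h
  exact (integrable_map_measure h.aestronglyMeasurable hW.aemeasurable).mp h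

section CVaR

variable {Ω : Type*} [MeasurableSpace Ω] {Q : Measure Ω} [IsProbabilityMeasure Q] {α : ℝ}

lemma integral_le_add_inv_mul_integral_max_sub_zero {Y : Ω → ℝ} (hY : Integrable Y Q)
    (hα : α ∈ Ioc 0 1) (t : ℝ) : ∫ ω, Y ω ∂Q ≤ t + α⁻¹ * ∫ ω, max (Y ω - t) 0 ∂Q := by
  have h_one_le : 1 ≤ α⁻¹ := one_le_inv₀ hα.1 |>.mpr hα.2
  have h_nonneg : 0 ≤ ∫ ω, max (Y ω - t) 0 ∂Q := integral_nonneg fun ω => le_max_right _ _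
  have h_sub_le : ∫ ω, Y ω ∂Q - t ≤ ∫ ω, max (Y ω - t) 0 ∂Q := by
    have hYt := hY.sub (integrable_const t)
    calc ∫ ω, Y ω ∂Q - t = ∫ ω, (Y ω - t) ∂Q := by simp [integral_sub hY (integrable_const t)]
      _ ≤ _ := integral_mono hYt hYt.pos_part fun ω => le_max_left _ _
  nlinarith

lemma cvar_le_cvar_add {X Y : Ω → ℝ} (hY : Integrable Y Q) (hα : α ∈ Ioc 0 1) {c : ℝ}
    (h : ∀ t, ∫ ω, max (Y ω - t) 0 ∂Q ≤ ∫ ω, max (X ω - t) 0 ∂Q + c) :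
    cvar Q α Y ≤ cvar Q α X + α⁻¹ * c := by
  have hbdd : BddBelow (range fun t => t + α⁻¹ * ∫ ω, max (Y ω - t) 0 ∂Q) :=
    ⟨∫ ω, Y ω ∂Q, forall_mem_range.mpr (integral_le_add_inv_mul_integral_max_sub_zero hY hα)⟩
  unfold cvar
  rw [← sub_le_iff_le_add]
  refine le_ciInf fun t => ?_
  have := mul_le_mul_of_nonneg_left (h t) (inv_pos.mpr hα.1).le
  linarith [ciInf_le hbdd t]

end CVaR

lemma integral_max_sub_zero_le {Ω : Type*} [MeasurableSpace Ω] {Q : Measure Ω} {X Y : Ω → ℝ}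
    (hX : Integrable X Q) (hY : Integrable Y Q) :
    ∫ ω, max (X ω - Y ω) 0 ∂Q ≤ ∫ ω, max (X ω) 0 ∂Q + ∫ ω, max (-Y ω) 0 ∂Q := by
  have hX' : Integrable (fun ω => max (X ω) 0) Q := hX.pos_part
  have hY' : Integrable (fun ω => max (-Y ω) 0) Q := hY.neg.pos_part
  rw [← integral_add hX' hY']
  refine integral_mono (hX.sub hY).pos_part (hX'.add hY') fun ω => ?_
  exact max_le (by linarith [le_max_left (X ω) 0, le_max_left (-Y ω) 0]) (by positivity)

lemma max_le_integral_max_sub_zero (ν : Measure ℝ) [IsProbabilityMeasure ν]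
    (hν : Integrable (fun y => y) ν) (hmean : ∫ y, y ∂ν = 0) (x : ℝ) :
    max x 0 ≤ ∫ y, max (x - y) 0 ∂ν := by
  have hxy : Integrable (fun y => x - y) ν := (integrable_const x).sub hν
  refine max_le ?_ (integral_nonneg fun y => le_max_right _ _)
  calc x = ∫ y, (x - y) ∂ν := by simp [integral_sub (integrable_const x) hν, hmean]
    _ ≤ ∫ y, max (x - y) 0 ∂ν := integral_mono hxy hxy.pos_part fun y => le_max_left _ _

lemma ProbabilityTheory.IndepFun.integral_max_zero_le_integral_max_sub_zero
    {Ω : Type*} [MeasurableSpace Ω] {Q : Measure Ω} [IsProbabilityMeasure Q] {X Y : Ω → ℝ}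
    (hX : Measurable X) (hY : Measurable Y) (hXY : IndepFun X Y Q) (hXi : Integrable X Q) (hYi : Integrable Y Q)
    (hmean : ∫ ω, Y ω ∂Q = 0) :
    ∫ ω, max (X ω) 0 ∂Q ≤ ∫ ω, max (X ω - Y ω) 0 ∂Q := by
  set f : ℝ × ℝ → ℝ := fun p => max (p.1 - p.2) 0
  have hf : Continuous f := by fun_prop
  have hXYm : AEMeasurable (fun ω => (X ω, Y ω)) Q := (hX.prodMk hY).aemeasurable
  have hmap : Q.map (fun ω => (X ω, Y ω)) = (Q.map X).prod (Q.map Y) :=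
    (indepFun_iff_map_prod_eq_prod_map_map hX.aemeasurable hY.aemeasurable).mp hXY
  have hfi : Integrable f ((Q.map X).prod (Q.map Y)) := by
    rw [← hmap]
    exact (integrable_map_measure hf.aestronglyMeasurable hXYm).mpr (hXi.sub hYi).pos_part
  have hYmap : Integrable (fun y => y) (Q.map Y) :=
    (integrable_map_measure aestronglyMeasurable_id hY.aemeasurable).mpr hYi
  have hYmean : ∫ y, y ∂(Q.map Y) = 0 := by
    rwa [integral_map hY.aemeasurable hYmap.aestronglyMeasurable]
  have hXmap : Integrable (fun x => max x 0) (Q.map X) :=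
    (integrable_map_measure (by fun_prop) hX.aemeasurable).mpr hXi.pos_part
  have : IsProbabilityMeasure (Q.map Y) := Measure.isProbabilityMeasure_map hY.aemeasurable
  calc ∫ ω, max (X ω) 0 ∂Q = ∫ x, max x 0 ∂(Q.map X) :=
        (integral_map hX.aemeasurable hXmap.aestronglyMeasurable).symm
    _ ≤ ∫ x, ∫ y, f (x, y) ∂(Q.map Y) ∂(Q.map X) :=
        integral_mono hXmap hfi.integral_prod_left
          (max_le_integral_max_sub_zero _ hYmap hYmean)
    _ = ∫ ω, max (X ω - Y ω) 0 ∂Q := by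
        rw [← integral_prod _ hfi, ← hmap, integral_map hXYm hf.aestronglyMeasurable]

/-- If `Z` is integrable and `W ~ N(0,σ²)` (`σ > 0`) is independent of `Z`,
then for every `α ∈ (0,1]`, `CV@R^α(Z) ≤ CV@R^α(Z - W) ≤ CV@R^α(Z) + σ/(α√(2π))`. -/
theorem cvar_gaussian_smoothing_bounds
    {Ω : Type*} [MeasurableSpace Ω] (Q : Measure Ω) [IsProbabilityMeasure Q]
    (Z W : Ω → ℝ) (hZmeas : Measurable Z) (hW : Measurable W)
    (hZ : Integrable Z Q)
    (hindep : IndepFun Z W Q)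
    (σ : ℝ) (hσ : 0 < σ)
    (hgauss : Measure.map W Q = gaussianReal 0 (Real.toNNReal (σ ^ 2)))
    (α : ℝ) (hα : α ∈ Set.Ioc (0 : ℝ) 1) :
    cvar Q α Z ≤ cvar Q α (fun ω => Z ω - W ω) ∧
    cvar Q α (fun ω => Z ω - W ω) ≤ cvar Q α Z + σ / (α * Real.sqrt (2 * Real.pi)) := by
  have hWi : Integrable W Q := integrable_of_map_eq_gaussianReal hW hgauss
  have hWmean : ∫ ω, W ω ∂Q = 0 := by
    rw [← integral_map (f := fun x => x) hW.aemeasurable aestronglyMeasurable_id, hgauss,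
      integral_id_gaussianReal]
  have hWneg : ∫ ω, max (-W ω) 0 ∂Q = σ / √(2 * π) := by
    rw [← integral_map (φ := W) (f := fun x => max (-x) 0) hW.aemeasurable (by fun_prop), hgauss,
      integral_max_neg_zero_gaussianReal, Real.coe_toNNReal _ (sq_nonneg σ), sqrt_sq hσ.le]
  constructor
  · have hlow (t : ℝ) :
        ∫ ω, max (Z ω - t) 0 ∂Q ≤ ∫ ω, max (Z ω - W ω - t) 0 ∂Q := by
      have hindep_t : IndepFun (fun ω => Z ω - t) W Q :=
        hindep.comp (measurable_id.sub_const t) measurable_id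
      simpa only [sub_right_comm] using hindep_t.integral_max_zero_le_integral_max_sub_zero
        (hZmeas.sub_const t) hW (hZ.sub (integrable_const t)) hWi hWmean
    simpa using cvar_le_cvar_add (c := 0) hZ hα fun t => by simpa using hlow t
  · have hup (t : ℝ) :
        ∫ ω, max (Z ω - W ω - t) 0 ∂Q ≤ ∫ ω, max (Z ω - t) 0 ∂Q + σ / √(2 * π) := by
      simpa only [sub_right_comm, hWneg] using
        integral_max_sub_zero_le (X := fun ω => Z ω - t) (hZ.sub (integrable_const t)) hWi
    calc cvar Q α (fun ω => Z ω - W ω) ≤ cvar Q α Z + α⁻¹ * (σ / √(2 * π)) :=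
          cvar_le_cvar_add (hZ.sub hWi) hα hup
      _ = cvar Q α Z + σ / (α * √(2 * π)) := by ring
end

section
/- Fix α ∈ (0,1], σ > 0 and t ∈ ℝ. Suppose that for P-almost every d ∈ D, the map θ ↦ ℓ(θ,d) is differentiable, G-Lipschitz, and has L-Lipschitz gradient on ℝ^m, and that ∇_θ ℓ(θ,·) is P-integrable for every θ. Then the map θ ↦ (1/α)·E_P[ Φ( (ℓ(θ,d) − t)/σ )·∇_θ ℓ(θ,d) ] is Lipschitz on ℝ^m with Lipschitz constant L' := (L·σ·√(2π) + G²)/(α·σ·√(2π)). (This map is the θ-gradient of the Gaussian-smoothed CV@R objective (θ,t) ↦ E[ t + (1/α)·(ℓ(θ,d) − w − t)_+ ] with w ~ N(0,σ²) independent of d.) -/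
/-!
Write `Φ_θ = Φ((ℓ(θ,d) - t)/σ)` and split, for each `d`,
`Φ_θ ∇ℓ(θ) - Φ_θ' ∇ℓ(θ') = Φ_θ (∇ℓ(θ) - ∇ℓ(θ')) + (Φ_θ - Φ_θ') ∇ℓ(θ')`.
Since `0 ≤ Φ ≤ 1` the first term is at most `L‖θ - θ'‖`. Since `Φ' = φ ≤ 1/√(2π)` and `ℓ` is
`G`-Lipschitz, `|Φ_θ - Φ_θ'| ≤ G‖θ - θ'‖/(σ√(2π))`, while a `G`-Lipschitz function has gradients of
norm at most `G`; so the second term is at most `G²‖θ - θ'‖/(σ√(2π))`. Integrating this a.e. bound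
against `P` and multiplying by `α⁻¹` gives the constant.
-/

open MeasureTheory

/-- The standard Gaussian cumulative distribution function
`Φ(u) = ∫_{-∞}^u (2π)^{-1/2} e^{-s²/2} ds`. -/
noncomputable def stdGaussianCDF (u : ℝ) : ℝ :=
  ∫ s in Set.Iic u, (Real.sqrt (2 * Real.pi))⁻¹ * Real.exp (-s ^ 2 / 2)

open Set Real ProbabilityTheory

lemma gaussianPDFReal_le_inv_sqrt (μ : ℝ) (v : NNReal) (x : ℝ) :
    gaussianPDFReal μ v x ≤ (√(2 * π * v))⁻¹ := by
  rw [gaussianPDFReal]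
  refine mul_le_of_le_one_right (by positivity) (exp_le_one_iff.mpr ?_)
  exact div_nonpos_of_nonpos_of_nonneg (neg_nonpos.mpr (sq_nonneg _)) (by positivity)

lemma stdGaussianCDF_eq_setIntegral_gaussianPDFReal (u : ℝ) :
    stdGaussianCDF u = ∫ s in Iic u, gaussianPDFReal 0 1 s := by
  simp [stdGaussianCDF, gaussianPDFReal]

lemma stdGaussianCDF_eq_cdf : stdGaussianCDF = cdf (gaussianReal 0 1) := by
  ext u
  rw [cdf_eq_real, measureReal_def, gaussianReal_apply_eq_integral _ one_ne_zero,
    ENNReal.toReal_ofReal (integral_nonneg fun _ => gaussianPDFReal_nonneg _ _ _),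
    stdGaussianCDF_eq_setIntegral_gaussianPDFReal]

lemma abs_stdGaussianCDF_sub_le (u v : ℝ) :
    |stdGaussianCDF u - stdGaussianCDF v| ≤ (√(2 * π))⁻¹ * |u - v| := by
  have hφ (b : ℝ) : IntegrableOn (gaussianPDFReal 0 1) (Iic b) :=
    (integrable_gaussianPDFReal 0 1).integrableOn
  rw [stdGaussianCDF_eq_setIntegral_gaussianPDFReal, stdGaussianCDF_eq_setIntegral_gaussianPDFReal,
    intervalIntegral.integral_Iic_sub_Iic (hφ v) (hφ u), ← Real.norm_eq_abs, ← Real.norm_eq_abs]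
  refine intervalIntegral.norm_integral_le_of_norm_le_const fun x _ => ?_
  rw [Real.norm_of_nonneg (gaussianPDFReal_nonneg _ _ _)]
  simpa using gaussianPDFReal_le_inv_sqrt 0 1 x

lemma abs_stdGaussianCDF_le_one (u : ℝ) : |stdGaussianCDF u| ≤ 1 := by
  rw [stdGaussianCDF_eq_cdf, abs_of_nonneg (cdf_nonneg _ u)]
  exact cdf_le_one _ u

lemma measurable_stdGaussianCDF : Measurable stdGaussianCDF :=
  stdGaussianCDF_eq_cdf ▸ (cdf _).mono.measurable

theorem HasGradientAt.norm_le_of_lipschitz {E : Type*} [NormedAddCommGroup E]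
    [InnerProductSpace ℝ E] [CompleteSpace E] {f : E → ℝ} {f' x : E} {C : ℝ}
    (hf : HasGradientAt f f' x) (hC : 0 ≤ C) (hlip : ∀ y, |f y - f x| ≤ C * ‖y - x‖) :
    ‖f'‖ ≤ C := by
  simpa using hf.hasFDerivAt.le_of_lip' hC (Filter.Eventually.of_forall hlip)

lemma norm_smul_sub_smul_le {E : Type*} [NormedAddCommGroup E] [NormedSpace ℝ E]
    {a b : ℝ} (u v : E) (ha : |a| ≤ 1) : ‖a • u - b • v‖ ≤ ‖u - v‖ + |a - b| * ‖v‖ := by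
  calc ‖a • u - b • v‖ = ‖a • (u - v) + (a - b) • v‖ := by congr 1; module
    _ ≤ |a| * ‖u - v‖ + |a - b| * ‖v‖ := by
        simpa only [norm_smul, Real.norm_eq_abs] using norm_add_le (a • (u - v)) ((a - b) • v)
    _ ≤ ‖u - v‖ + |a - b| * ‖v‖ := by
        gcongr
        exact mul_le_of_le_one_left (norm_nonneg (u - v)) ha

lemma MeasureTheory.Integrable.stdGaussianCDF_comp_smul {α E : Type*} [MeasurableSpace α]
    {μ : Measure α} [NormedAddCommGroup E] [NormedSpace ℝ E] {h : α → ℝ} {f : α → E}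
    (hf : Integrable f μ) (hh : AEMeasurable h μ) :
    Integrable (fun a => stdGaussianCDF (h a) • f a) μ :=
  hf.bdd_smul 1 (measurable_stdGaussianCDF.comp_aemeasurable hh).aestronglyMeasurable
    (ae_of_all _ fun a => by simpa using abs_stdGaussianCDF_le_one (h a))

lemma norm_integral_sub_integral_le {α E : Type*} [MeasurableSpace α] {μ : Measure α}
    [IsProbabilityMeasure μ] [NormedAddCommGroup E] [NormedSpace ℝ E] {f g : α → E} {C : ℝ}
    (hf : Integrable f μ) (hg : Integrable g μ) (h : ∀ᵐ a ∂μ, ‖f a - g a‖ ≤ C) :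
    ‖∫ a, f a ∂μ - ∫ a, g a ∂μ‖ ≤ C := by
  rw [← integral_sub hf hg]
  simpa using norm_integral_le_of_norm_le_const h

lemma norm_stdGaussianCDF_smul_gradient_sub_le {E : Type*} [NormedAddCommGroup E]
    [InnerProductSpace ℝ E] [CompleteSpace E] {f : E → ℝ} {f' : E → E} {G L σ : ℝ}
    (hσ : 0 < σ) (t : ℝ) (hf : ∀ x, HasGradientAt f (f' x) x)
    (hG : ∀ x y, |f x - f y| ≤ G * ‖x - y‖) (hL : ∀ x y, ‖f' x - f' y‖ ≤ L * ‖x - y‖)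
    (x y : E) :
    ‖stdGaussianCDF ((f x - t) / σ) • f' x - stdGaussianCDF ((f y - t) / σ) • f' y‖ ≤
      (L + G ^ 2 / (σ * √(2 * π))) * ‖x - y‖ := by
  rcases eq_or_ne x y with rfl | hxy
  · simp
  have hG0 : 0 ≤ G := nonneg_of_mul_nonneg_left ((abs_nonneg _).trans (hG x y))
    (norm_pos_iff.mpr (sub_ne_zero.mpr hxy))
  have hgrad : ‖f' y‖ ≤ G := (hf y).norm_le_of_lipschitz hG0 fun z => hG z y
  have hΦ : |stdGaussianCDF ((f x - t) / σ) - stdGaussianCDF ((f y - t) / σ)| ≤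
      (√(2 * π))⁻¹ * (G * ‖x - y‖ / σ) := by
    refine (abs_stdGaussianCDF_sub_le _ _).trans ?_
    rw [div_sub_div_same, sub_sub_sub_cancel_right, abs_div, abs_of_pos hσ]
    gcongr
    exact hG x y
  calc _ ≤ ‖f' x - f' y‖ +
        |stdGaussianCDF ((f x - t) / σ) - stdGaussianCDF ((f y - t) / σ)| * ‖f' y‖ :=
        norm_smul_sub_smul_le _ _ (abs_stdGaussianCDF_le_one _)
    _ ≤ L * ‖x - y‖ + (√(2 * π))⁻¹ * (G * ‖x - y‖ / σ) * G := by
        gcongr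
        exact hL x y
    _ = (L + G ^ 2 / (σ * √(2 * π))) * ‖x - y‖ := by
        field_simp

theorem smoothed_cvar_gradient_lipschitz_general
    {m : ℕ} {D : Type*} [MeasurableSpace D]
    (P : Measure D) [IsProbabilityMeasure P]
    (ℓ : EuclideanSpace ℝ (Fin m) → D → ℝ)
    (g : EuclideanSpace ℝ (Fin m) → D → EuclideanSpace ℝ (Fin m))
    (hmeas : ∀ θ, Measurable (ℓ θ))
    (hintg : ∀ θ, Integrable (g θ) P)
    (α σ t : ℝ) (hα : α ∈ Set.Ioc (0 : ℝ) 1) (hσ : 0 < σ)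
    (G L : ℝ)
    (hdiff : ∀ᵐ d ∂P, ∀ θ, HasGradientAt (fun θ' => ℓ θ' d) (g θ d) θ)
    (hGlip : ∀ᵐ d ∂P, ∀ θ θ', |ℓ θ d - ℓ θ' d| ≤ G * ‖θ - θ'‖)
    (hLlip : ∀ᵐ d ∂P, ∀ θ θ', ‖g θ d - g θ' d‖ ≤ L * ‖θ - θ'‖) :
    ∀ θ θ' : EuclideanSpace ℝ (Fin m),
      ‖(α⁻¹ • ∫ d, stdGaussianCDF ((ℓ θ d - t) / σ) • g θ d ∂P) -
          α⁻¹ • ∫ d, stdGaussianCDF ((ℓ θ' d - t) / σ) • g θ' d ∂P‖ ≤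
        (L * σ * Real.sqrt (2 * Real.pi) + G ^ 2) / (α * σ * Real.sqrt (2 * Real.pi)) *
          ‖θ - θ'‖ := by
  intro θ θ'
  have hint (ϑ) : Integrable (fun d => stdGaussianCDF ((ℓ ϑ d - t) / σ) • g ϑ d) P :=
    (hintg ϑ).stdGaussianCDF_comp_smul (((hmeas ϑ).sub_const t).div_const σ).aemeasurable
  have hpointwise : ∀ᵐ d ∂P,
      ‖stdGaussianCDF ((ℓ θ d - t) / σ) • g θ d - stdGaussianCDF ((ℓ θ' d - t) / σ) • g θ' d‖ ≤
        (L + G ^ 2 / (σ * √(2 * π))) * ‖θ - θ'‖ := by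
    filter_upwards [hdiff, hGlip, hLlip] with d hd hG hL
    exact norm_stdGaussianCDF_smul_gradient_sub_le hσ t hd hG hL θ θ'
  have hα0 : 0 ≤ α⁻¹ := inv_nonneg.mpr hα.1.le
  rw [← smul_sub, norm_smul, Real.norm_of_nonneg hα0]
  calc _ ≤ α⁻¹ * ((L + G ^ 2 / (σ * √(2 * π))) * ‖θ - θ'‖) :=
        mul_le_mul_of_nonneg_left (norm_integral_sub_integral_le (hint θ) (hint θ') hpointwise) hα0
    _ = _ := by
        field_simp

/-- Fix `α ∈ (0,1]`, `σ > 0`, `t ∈ ℝ`. If for `P`-a.e. `d` the loss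
`θ ↦ ℓ θ d` is differentiable with gradient `g θ d`, `G`-Lipschitz, and has `L`-Lipschitz
gradient, with integrable gradients, then the `θ`-gradient of the Gaussian-smoothed CV@R
objective, `θ ↦ (1/α)·E_P[Φ((ℓ(θ,d) - t)/σ)·∇ℓ(θ,d)]`, is Lipschitz with constant
`L' = (Lσ√(2π) + G²)/(ασ√(2π))`. -/
theorem smoothed_cvar_gradient_lipschitz
    {m : ℕ} {D : Type*} [MeasurableSpace D]
    (P : Measure D) [IsProbabilityMeasure P]
    (ℓ : EuclideanSpace ℝ (Fin m) → D → ℝ)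
    (g : EuclideanSpace ℝ (Fin m) → D → EuclideanSpace ℝ (Fin m))
    (hmeas : ∀ θ, Measurable (ℓ θ))
    (hintℓ : ∀ θ, Integrable (ℓ θ) P)
    (hintg : ∀ θ, Integrable (g θ) P)
    (α σ t : ℝ) (hα : α ∈ Set.Ioc (0 : ℝ) 1) (hσ : 0 < σ)
    (G L : ℝ)
    (hdiff : ∀ᵐ d ∂P, ∀ θ, HasGradientAt (fun θ' => ℓ θ' d) (g θ d) θ)
    (hGlip : ∀ᵐ d ∂P, ∀ θ θ', |ℓ θ d - ℓ θ' d| ≤ G * ‖θ - θ'‖)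
    (hLlip : ∀ᵐ d ∂P, ∀ θ θ', ‖g θ d - g θ' d‖ ≤ L * ‖θ - θ'‖) :
    ∀ θ θ' : EuclideanSpace ℝ (Fin m),
      ‖(α⁻¹ • ∫ d, stdGaussianCDF ((ℓ θ d - t) / σ) • g θ d ∂P) -
          α⁻¹ • ∫ d, stdGaussianCDF ((ℓ θ' d - t) / σ) • g θ' d ∂P‖ ≤
        (L * σ * Real.sqrt (2 * Real.pi) + G ^ 2) / (α * σ * Real.sqrt (2 * Real.pi)) *
          ‖θ - θ'‖ :=
  smoothed_cvar_gradient_lipschitz_general P ℓ g hmeas hintg α σ t hα hσ G L hdiff hGlip hLlip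
end
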